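/- Let y be an odd positive integer and let d ≥ 1. Then for all (x,z) ∈ ℕ×ℕ, writing x' = ⌊x/2^d⌋, z' = ⌊z/2^d⌋, x'' = x mod 2^d, z'' = z mod 2^d, one has culam[2^d·y](x,z) = min(2, culam[y−1](x',z')·E1[d](x'',z'') + culam[y](x',z')·E2[d](x'',z'')). -/

import Mathlib

/-- Fuel-indexed Ulam predicate: a binary word (as a `List Bool`) of length 1 is Ulam,
and a longer word is Ulam iff it is expressible *uniquely* as a concatenation of two
distinct (nonempty) Ulam words. The fuel strictly exceeds the lengths needed. -/
def ulamAux : ℕ → List Bool → Prop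
  | 0, _ => False
  | n + 1, w =>
    if w.length = 1 then True
    else ∃! p : List Bool × List Bool,
      p.1 ≠ [] ∧ p.2 ≠ [] ∧ p.1 ≠ p.2 ∧ w = p.1 ++ p.2 ∧
        ulamAux n p.1 ∧ ulamAux n p.2

/-- A binary word is an Ulam word. -/
def IsUlam (w : List Bool) : Prop := ulamAux w.length w

/-- The word `0^x 1 0^y`. -/
def wordTwo (x y : ℕ) : List Bool :=
  List.replicate x false ++ [true] ++ List.replicate y false

/-- The word `0^x 1 0^y 1 0^z`. -/
def wordThree (x y z : ℕ) : List Bool :=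
  List.replicate x false ++ [true] ++ List.replicate y false ++ [true] ++
    List.replicate z false

/-- `UlamSet y` is the set of pairs `(x,z)` such that `0^x 1 0^y 1 0^z` is Ulam. -/
def UlamSet (y : ℕ) : Set (ℕ × ℕ) := {p | IsUlam (wordThree p.1 y p.2)}

/-- `culam y x z = min(2, N)` where `N` counts `0 ≤ a ≤ y` with both
`w(x,a)` and `w(y-a,z)` Ulam. -/
noncomputable def culam (y x z : ℕ) : ℕ :=
  min 2 {a : ℕ | a ≤ y ∧ IsUlam (wordTwo x a) ∧ IsUlam (wordTwo (y - a) z)}.ncard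

/-- A positive integer is Zumkeller if its binary representation has at most one `0`. -/
def IsZumkeller (y : ℕ) : Prop := 0 < y ∧ (Nat.bits y).count false ≤ 1

/-- The largest `e ≤ d - 1` with `x mod 2^(e+1) < 2^e` and `z mod 2^(e+1) < 2^e`
(and `0` if none exists). -/
def eIdx (d x z : ℕ) : ℕ :=
  Nat.findGreatest (fun e => x % 2 ^ (e + 1) < 2 ^ e ∧ z % 2 ^ (e + 1) < 2 ^ e) (d - 1)

/-- The universal pattern `E1[d]` on `B_d`. -/
def E1 (d x z : ℕ) : ℕ :=
  if 2 ^ d - 1 ≤ x + z then 0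
  else if x % 2 ^ eIdx d x z + z % 2 ^ eIdx d x z < 2 ^ eIdx d x z - 1 then 2 else 1

/-- The universal pattern `E2[d]` on `B_d` (constant `1`). -/
def E2 (_d _x _z : ℕ) : ℕ := 1

/-- The universal pattern `O1[d]` on `B_d`. -/
def O1 (d x z : ℕ) : ℕ :=
  if 2 ^ d - 2 ≤ x + z then 0
  else if (x + z) % 2 = 0 then (if x % 2 = 1 then 0 else 2)
  else if x % 2 ^ eIdx d x z + z % 2 ^ eIdx d x z < 2 ^ eIdx d x z - 1 then 2 else 1

/-- The universal pattern `O2[d]` on `B_d` (independent of `d`). -/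
def O2 (_d x z : ℕ) : ℕ :=
  if (x + z) % 2 = 0 then (if x % 2 = 1 then 0 else 2) else 1

lemma eq_zero_iff_testBit (x : ℕ) : x = 0 ↔ ∀ i, x.testBit i = false := by
  constructor
  · rintro rfl i; simp
  · intro h; exact Nat.eq_of_testBit_eq (fun i => by simp [h])

lemma land_zero_iff (x y : ℕ) :
    x &&& y = 0 ↔ (x % 2 = 0 ∨ y % 2 = 0) ∧ (x / 2) &&& (y / 2) = 0 := by
  rw [eq_zero_iff_testBit (x &&& y), eq_zero_iff_testBit (x/2 &&& y/2)]
  constructor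
  · intro h
    refine ⟨?_, fun i => ?_⟩
    · have := h 0
      rw [Nat.testBit_land] at this
      simp only [Nat.testBit_zero, Bool.and_eq_false_iff, decide_eq_false_iff_not] at this
      omega
    · have := h (i+1)
      rw [Nat.testBit_land] at this ⊢
      simpa [Nat.testBit_succ] using this
  · rintro ⟨h0, h⟩ i
    cases i with
    | zero =>
      rw [Nat.testBit_land]
      simp only [Nat.testBit_zero, Bool.and_eq_false_iff, decide_eq_false_iff_not]
      omega
    | succ i =>
      have := h i
      rw [Nat.testBit_land] at this ⊢
      simpa [Nat.testBit_succ] using this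

lemma land_pascal_aux : ∀ N x y : ℕ, x + y ≤ N → 1 ≤ x + y →
    (x &&& y = 0 ↔ Xor' (1 ≤ x ∧ (x-1) &&& y = 0) (1 ≤ y ∧ x &&& (y-1) = 0)) := by
  intro N
  induction N with
  | zero => intro x y h1 h2; omega
  | succ N ih =>
    intro x y hN h1
    set m := x / 2 with hm
    set n := y / 2 with hn
    rcases Nat.mod_two_eq_zero_or_one x with hx | hx <;>
      rcases Nat.mod_two_eq_zero_or_one y with hy | hy
    · -- both even
      have key := ih m n (by omega) (by omega)
      have e1 : x &&& y = 0 ↔ m &&& n = 0 := by rw [land_zero_iff]; simp [hx, hm, hn]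
      have E2 : (1 ≤ x ∧ (x-1) &&& y = 0) ↔ (1 ≤ m ∧ (m-1) &&& n = 0) := by
        constructor
        · rintro ⟨h, h'⟩
          rw [land_zero_iff, show (x-1)/2 = m - 1 by omega] at h'
          exact ⟨by omega, h'.2⟩
        · rintro ⟨h, h'⟩
          refine ⟨by omega, ?_⟩
          rw [land_zero_iff, show (x-1)/2 = m - 1 by omega]
          exact ⟨Or.inr hy, h'⟩
      have E3 : (1 ≤ y ∧ x &&& (y-1) = 0) ↔ (1 ≤ n ∧ m &&& (n-1) = 0) := by
        constructor
        · rintro ⟨h, h'⟩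
          rw [land_zero_iff, show (y-1)/2 = n - 1 by omega] at h'
          exact ⟨by omega, h'.2⟩
        · rintro ⟨h, h'⟩
          refine ⟨by omega, ?_⟩
          rw [land_zero_iff, show (y-1)/2 = n - 1 by omega]
          exact ⟨Or.inl hx, h'⟩
      rw [e1, E2, E3, key]
    · -- x even, y odd
      have e1 : x &&& y = 0 ↔ m &&& n = 0 := by rw [land_zero_iff]; simp [hx, hm, hn]
      have E3 : (1 ≤ y ∧ x &&& (y-1) = 0) ↔ (m &&& n = 0) := by
        constructor
        · rintro ⟨h, h'⟩
          rw [land_zero_iff, show (y-1)/2 = n by omega] at h'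
          exact h'.2
        · intro h'
          refine ⟨by omega, ?_⟩
          rw [land_zero_iff, show (y-1)/2 = n by omega]
          exact ⟨by omega, h'⟩
      have E2 : (1 ≤ x ∧ (x-1) &&& y = 0) ↔ False := by
        simp only [iff_false, not_and]
        intro h
        rw [land_zero_iff]
        rintro ⟨h1 | h1, -⟩ <;> omega
      rw [e1, E2, E3]
      simp [Xor']
    · -- x odd, y even
      have e1 : x &&& y = 0 ↔ m &&& n = 0 := by rw [land_zero_iff]; simp [hy, hm, hn]
      have E2 : (1 ≤ x ∧ (x-1) &&& y = 0) ↔ (m &&& n = 0) := by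
        constructor
        · rintro ⟨h, h'⟩
          rw [land_zero_iff, show (x-1)/2 = m by omega] at h'
          exact h'.2
        · intro h'
          refine ⟨by omega, ?_⟩
          rw [land_zero_iff, show (x-1)/2 = m by omega]
          exact ⟨by omega, h'⟩
      have E3 : (1 ≤ y ∧ x &&& (y-1) = 0) ↔ False := by
        simp only [iff_false, not_and]
        intro h
        rw [land_zero_iff]
        rintro ⟨h1 | h1, -⟩ <;> omega
      rw [e1, E2, E3]
      simp [Xor', Xor]
    · -- both odd
      have e1 : x &&& y = 0 ↔ False := by
        rw [land_zero_iff]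
        simp only [iff_false, not_and]
        rintro (h1 | h1) <;> omega
      have E2 : (1 ≤ x ∧ (x-1) &&& y = 0) ↔ (m &&& n = 0) := by
        constructor
        · rintro ⟨h, h'⟩
          rw [land_zero_iff, show (x-1)/2 = m by omega] at h'
          exact h'.2
        · intro h'
          refine ⟨by omega, ?_⟩
          rw [land_zero_iff, show (x-1)/2 = m by omega]
          exact ⟨by omega, h'⟩
      have E3 : (1 ≤ y ∧ x &&& (y-1) = 0) ↔ (m &&& n = 0) := by
        constructor
        · rintro ⟨h, h'⟩
          rw [land_zero_iff, show (y-1)/2 = n by omega] at h'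
          exact h'.2
        · intro h'
          refine ⟨by omega, ?_⟩
          rw [land_zero_iff, show (y-1)/2 = n by omega]
          exact ⟨by omega, h'⟩
      rw [e1, E2, E3]
      simp [Xor']

lemma ulamAux_succ (n : ℕ) (w : List Bool) : ulamAux (n+1) w =
    if w.length = 1 then True
    else ∃! p : List Bool × List Bool,
      p.1 ≠ [] ∧ p.2 ≠ [] ∧ p.1 ≠ p.2 ∧ w = p.1 ++ p.2 ∧
        ulamAux n p.1 ∧ ulamAux n p.2 := rfl

lemma ulamAux_congr : ∀ m n (w : List Bool), w ≠ [] → w.length ≤ m → w.length ≤ n →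
    (ulamAux m w ↔ ulamAux n w) := by
  intro m
  induction m with
  | zero =>
    intro n w hw h1 h2
    have := List.length_pos_iff.mpr hw
    omega
  | succ m ih =>
    intro n w hw h1 h2
    have hlen := List.length_pos_iff.mpr hw
    obtain ⟨n', rfl⟩ : ∃ n', n = n' + 1 := ⟨n - 1, by omega⟩
    rw [ulamAux_succ, ulamAux_succ]
    by_cases hL : w.length = 1
    · simp [hL]
    · rw [if_neg hL, if_neg hL]
      constructor
      · rintro ⟨p, ⟨h1', h2', h3', h4', h5', h6'⟩, hu⟩
        have hl1 : 0 < p.1.length := List.length_pos_iff.mpr h1'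
        have hl2 : 0 < p.2.length := List.length_pos_iff.mpr h2'
        have hl : w.length = p.1.length + p.2.length := by rw [h4']; simp
        refine ⟨p, ⟨h1', h2', h3', h4',
          (ih n' p.1 h1' (by omega) (by omega)).mp h5',
          (ih n' p.2 h2' (by omega) (by omega)).mp h6'⟩, ?_⟩
        rintro q ⟨g1, g2, g3, g4, g5, g6⟩
        have gl1 : 0 < q.1.length := List.length_pos_iff.mpr g1
        have gl2 : 0 < q.2.length := List.length_pos_iff.mpr g2
        have gl : w.length = q.1.length + q.2.length := by rw [g4]; simp
        exact hu q ⟨g1, g2, g3, g4,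
          (ih n' q.1 g1 (by omega) (by omega)).mpr g5,
          (ih n' q.2 g2 (by omega) (by omega)).mpr g6⟩
      · rintro ⟨p, ⟨h1', h2', h3', h4', h5', h6'⟩, hu⟩
        have hl1 : 0 < p.1.length := List.length_pos_iff.mpr h1'
        have hl2 : 0 < p.2.length := List.length_pos_iff.mpr h2'
        have hl : w.length = p.1.length + p.2.length := by rw [h4']; simp
        refine ⟨p, ⟨h1', h2', h3', h4',
          (ih n' p.1 h1' (by omega) (by omega)).mpr h5',
          (ih n' p.2 h2' (by omega) (by omega)).mpr h6'⟩, ?_⟩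
        rintro q ⟨g1, g2, g3, g4, g5, g6⟩
        have gl1 : 0 < q.1.length := List.length_pos_iff.mpr g1
        have gl2 : 0 < q.2.length := List.length_pos_iff.mpr g2
        have gl : w.length = q.1.length + q.2.length := by rw [g4]; simp
        exact hu q ⟨g1, g2, g3, g4,
          (ih n' q.1 g1 (by omega) (by omega)).mp g5,
          (ih n' q.2 g2 (by omega) (by omega)).mp g6⟩

lemma isUlam_iff_aux (n : ℕ) (w : List Bool) (hw : w ≠ []) (h : w.length ≤ n) :
    IsUlam w ↔ ulamAux n w :=
  ulamAux_congr w.length n w hw le_rfl h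

lemma existsUnique_pair_iff {α : Sort*} (A B : α) (hAB : A ≠ B) (C1 C2 : Prop) (P : α → Prop)
    (h : ∀ p, P p ↔ (C1 ∧ p = A) ∨ (C2 ∧ p = B)) : (∃! p, P p) ↔ Xor' C1 C2 := by
  constructor
  · rintro ⟨p, hp, hu⟩
    rcases (h p).mp hp with ⟨hc, rfl⟩ | ⟨hc, rfl⟩
    · refine Or.inl ⟨hc, fun hc2 => hAB ?_⟩
      exact (hu B ((h B).mpr (Or.inr ⟨hc2, rfl⟩))).symm
    · refine Or.inr ⟨hc, fun hc1 => hAB ?_⟩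
      exact (hu A ((h A).mpr (Or.inl ⟨hc1, rfl⟩)))
  · rintro (⟨hc1, hc2⟩ | ⟨hc2, hc1⟩)
    · refine ⟨A, (h A).mpr (Or.inl ⟨hc1, rfl⟩), fun q hq => ?_⟩
      rcases (h q).mp hq with ⟨_, rfl⟩ | ⟨hc, rfl⟩
      · rfl
      · exact absurd hc hc2
    · refine ⟨B, (h B).mpr (Or.inr ⟨hc2, rfl⟩), fun q hq => ?_⟩
      rcases (h q).mp hq with ⟨hc, rfl⟩ | ⟨_, rfl⟩
      · exact absurd hc hc1
      · rfl

lemma rep_ulam : ∀ k, IsUlam (List.replicate k false) ↔ k = 1 := by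
  intro k
  induction k using Nat.strong_induction_on with
  | _ k ih =>
    match k with
    | 0 => simp [IsUlam, ulamAux]
    | 1 => simp [IsUlam, ulamAux]
    | (k+2) =>
      simp only [show ¬ (k+2 = 1) by omega, iff_false]
      intro h
      unfold IsUlam at h
      rw [List.length_replicate, ulamAux_succ, if_neg (by simp)] at h
      obtain ⟨p, ⟨h1, h2, h3, h4, h5, h6⟩, -⟩ := h
      have hmem1 : ∀ b ∈ p.1, b = false := by
        intro b hb
        have : b ∈ List.replicate (k+2) false := by rw [h4]; simp [hb]
        exact (List.eq_of_mem_replicate this)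
      have hmem2 : ∀ b ∈ p.2, b = false := by
        intro b hb
        have : b ∈ List.replicate (k+2) false := by rw [h4]; simp [hb]
        exact (List.eq_of_mem_replicate this)
      have e1 : p.1 = List.replicate p.1.length false := List.eq_replicate_of_mem hmem1
      have e2 : p.2 = List.replicate p.2.length false := List.eq_replicate_of_mem hmem2
      have hl1 : 0 < p.1.length := List.length_pos_iff.mpr h1
      have hl2 : 0 < p.2.length := List.length_pos_iff.mpr h2
      have hl : k + 2 = p.1.length + p.2.length := by
        have := congrArg List.length h4
        simpa using this
      have u1 : IsUlam p.1 := by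
        rw [isUlam_iff_aux (k+1) p.1 h1 (by omega)]; exact h5
      have u2 : IsUlam p.2 := by
        rw [isUlam_iff_aux (k+1) p.2 h2 (by omega)]; exact h6
      rw [e1] at u1
      rw [e2] at u2
      have k1 : p.1.length = 1 := (ih p.1.length (by omega)).mp u1
      have k2 : p.2.length = 1 := (ih p.2.length (by omega)).mp u2
      apply h3
      rw [e1, e2, k1, k2]

lemma wordTwo_length (a b : ℕ) : (wordTwo a b).length = a + b + 1 := by
  simp [wordTwo]; omega

lemma wordTwo_ne_nil (a b : ℕ) : wordTwo a b ≠ [] := by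
  intro h
  have := congrArg List.length h
  rw [wordTwo_length] at this
  simp at this

lemma wordTwo_ne_single (a b : ℕ) : wordTwo a b ≠ [false] := by
  intro h
  have : true ∈ wordTwo a b := by simp [wordTwo]
  rw [h] at this
  simp at this

lemma wordTwo_cons (x y : ℕ) (hx : 1 ≤ x) :
    wordTwo x y = false :: wordTwo (x-1) y := by
  obtain ⟨x', rfl⟩ : ∃ x', x = x' + 1 := ⟨x - 1, by omega⟩
  simp [wordTwo, List.replicate_succ]

lemma wordTwo_snoc (x y : ℕ) (hy : 1 ≤ y) :
    wordTwo x y = wordTwo x (y-1) ++ [false] := by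
  obtain ⟨y', rfl⟩ : ∃ y', y = y' + 1 := ⟨y - 1, by omega⟩
  simp [wordTwo, List.replicate_succ']

lemma isUlam_wordTwo_rec (x y : ℕ) (h : 1 ≤ x + y) :
    IsUlam (wordTwo x y) ↔
      Xor' (1 ≤ x ∧ IsUlam (wordTwo (x-1) y)) (1 ≤ y ∧ IsUlam (wordTwo x (y-1))) := by
  unfold IsUlam
  rw [show (wordTwo x y).length = (x+y)+1 from by rw [wordTwo_length]]
  rw [ulamAux_succ, if_neg (by rw [wordTwo_length]; omega)]
  apply existsUnique_pair_iff ([false], wordTwo (x-1) y) (wordTwo x (y-1), [false])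
  · intro hcontra
    have := congrArg Prod.fst hcontra
    exact wordTwo_ne_single x (y-1) this.symm
  · intro p
    constructor
    · rintro ⟨h1, h2, h3, h4, h5, h6⟩
      have hl1 : 0 < p.1.length := List.length_pos_iff.mpr h1
      have hl2 : 0 < p.2.length := List.length_pos_iff.mpr h2
      have hl : p.1.length + p.2.length = x + y + 1 := by
        have := congrArg List.length h4
        rw [wordTwo_length] at this
        simp at this
        omega
      have u1 : IsUlam p.1 := (isUlam_iff_aux (x+y) p.1 h1 (by omega)).mpr h5
      have u2 : IsUlam p.2 := (isUlam_iff_aux (x+y) p.2 h2 (by omega)).mpr h6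
      by_cases hc : p.1.length ≤ x
      · -- p.1 is a block of zeros
        have hx' : List.replicate x false =
            List.replicate p.1.length false ++ List.replicate (x - p.1.length) false := by
          rw [← List.replicate_add]; congr 1; omega
        have hsplit : wordTwo x y = List.replicate p.1.length false ++
            (List.replicate (x - p.1.length) false ++ [true] ++ List.replicate y false) := by
          rw [wordTwo, List.append_assoc, List.append_assoc, hx', List.append_assoc]
        have e1 : p.1 = List.replicate p.1.length false := by
          rw [hsplit] at h4
          exact (List.append_inj h4.symm (by simp)).1
        have k1 : p.1.length = 1 := by
          rw [e1] at u1
          exact (rep_ulam _).mp u1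
        have hx1 : 1 ≤ x := by omega
        have hp1 : p.1 = [false] := by rw [e1, k1]; rfl
        have hp2 : p.2 = wordTwo (x-1) y := by
          rw [wordTwo_cons x y hx1, hp1] at h4
          simpa using h4.symm
        refine Or.inl ⟨⟨hx1, hp2 ▸ u2⟩, ?_⟩
        exact Prod.ext hp1 hp2
      · -- p.2 is a block of zeros
        have hly : p.2.length ≤ y := by omega
        have e2 : p.2 = List.replicate p.2.length false := by
          have hy' : List.replicate y false =
              List.replicate (y - p.2.length) false ++ List.replicate p.2.length false := by
            rw [← List.replicate_add]; congr 1; omega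
          have hsplit : wordTwo x y =
              (List.replicate x false ++ [true] ++ List.replicate (y - p.2.length) false)
                ++ List.replicate p.2.length false := by
            rw [wordTwo, hy', ← List.append_assoc]
          rw [hsplit] at h4
          have := List.append_inj' h4 (by simp)
          exact this.2.symm
        have k2 : p.2.length = 1 := by
          rw [e2] at u2
          exact (rep_ulam _).mp u2
        have hy1 : 1 ≤ y := by omega
        have hp2 : p.2 = [false] := by rw [e2, k2]; rfl
        have hp1 : p.1 = wordTwo x (y-1) := by
          rw [wordTwo_snoc x y hy1, hp2] at h4
          exact (List.append_inj' h4 (by simp)).1.symm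
        refine Or.inr ⟨⟨hy1, hp1 ▸ u1⟩, ?_⟩
        exact Prod.ext hp1 hp2
    · rintro (⟨⟨hx1, hU⟩, rfl⟩ | ⟨⟨hy1, hU⟩, rfl⟩)
      · refine ⟨by simp, wordTwo_ne_nil _ _, Ne.symm (wordTwo_ne_single _ _), ?_, ?_, ?_⟩
        · exact wordTwo_cons x y hx1
        · exact (isUlam_iff_aux (x+y) [false] (by simp) (by simp; omega)).mp
            (by rw [show ([false] : List Bool) = List.replicate 1 false from rfl]
                exact (rep_ulam 1).mpr rfl)
        · refine (isUlam_iff_aux (x+y) _ (wordTwo_ne_nil _ _) ?_).mp hU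
          rw [wordTwo_length]; omega
      · refine ⟨wordTwo_ne_nil _ _, by simp, ?_, ?_, ?_, ?_⟩
        · intro hcontra
          exact wordTwo_ne_single x (y-1) hcontra
        · exact wordTwo_snoc x y hy1
        · refine (isUlam_iff_aux (x+y) _ (wordTwo_ne_nil _ _) ?_).mp hU
          rw [wordTwo_length]; omega
        · exact (isUlam_iff_aux (x+y) [false] (by simp) (by simp; omega)).mp
            (by rw [show ([false] : List Bool) = List.replicate 1 false from rfl]
                exact (rep_ulam 1).mpr rfl)

lemma isUlam_wordTwo_base : IsUlam (wordTwo 0 0) := by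
  simp [IsUlam, wordTwo, ulamAux]

lemma isUlam_wordTwo : ∀ x y : ℕ, IsUlam (wordTwo x y) ↔ x &&& y = 0 := by
  suffices h : ∀ n x y, x + y ≤ n → (IsUlam (wordTwo x y) ↔ x &&& y = 0) from
    fun x y => h (x+y) x y le_rfl
  intro n
  induction n with
  | zero =>
    intro x y h
    obtain ⟨rfl, rfl⟩ : x = 0 ∧ y = 0 := by omega
    simp [isUlam_wordTwo_base]
  | succ n ih =>
    intro x y h
    rcases Nat.eq_zero_or_pos (x+y) with h0 | h0
    · obtain ⟨rfl, rfl⟩ : x = 0 ∧ y = 0 := by omega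
      simp [isUlam_wordTwo_base]
    · rw [isUlam_wordTwo_rec x y h0, land_pascal_aux (x+y) x y le_rfl h0]
      have E2 : (1 ≤ x ∧ IsUlam (wordTwo (x-1) y)) ↔ (1 ≤ x ∧ (x-1) &&& y = 0) :=
        and_congr_right fun _ => ih (x-1) y (by omega)
      have E3 : (1 ≤ y ∧ IsUlam (wordTwo x (y-1))) ↔ (1 ≤ y ∧ x &&& (y-1) = 0) :=
        and_congr_right fun _ => ih x (y-1) (by omega)
      rw [E2, E3]

def ucount (y x z : ℕ) : ℕ :=
  ((Finset.range (y+1)).filter (fun a => x &&& a = 0 ∧ (y-a) &&& z = 0)).card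

lemma ucount_eq_sum (y x z : ℕ) : ucount y x z =
    ∑ a ∈ Finset.range (y+1), (if x &&& a = 0 ∧ (y-a) &&& z = 0 then 1 else 0) := by
  rw [ucount, Finset.card_filter]

lemma sum_range_even (f : ℕ → ℕ) (m : ℕ) :
    ∑ a ∈ Finset.range (2*m), f a = ∑ a ∈ Finset.range m, (f (2*a) + f (2*a+1)) := by
  induction m with
  | zero => simp
  | succ m ih =>
    rw [show 2*(m+1) = (2*m)+1+1 by ring, Finset.sum_range_succ, Finset.sum_range_succ,
      Finset.sum_range_succ, ih]
    omega

lemma land_even_right (x a : ℕ) : x &&& (2*a) = 0 ↔ (x/2) &&& a = 0 := by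
  rw [land_zero_iff, show 2*a % 2 = 0 by omega, show 2*a/2 = a by omega]
  simp

lemma land_odd_right (x a : ℕ) : x &&& (2*a+1) = 0 ↔ x % 2 = 0 ∧ (x/2) &&& a = 0 := by
  rw [land_zero_iff, show (2*a+1) % 2 = 1 by omega, show (2*a+1)/2 = a by omega]
  simp

lemma land_even_left (x a : ℕ) : (2*a) &&& x = 0 ↔ a &&& (x/2) = 0 := by
  rw [land_zero_iff, show 2*a % 2 = 0 by omega, show 2*a/2 = a by omega]
  simp

lemma land_odd_left (x a : ℕ) : (2*a+1) &&& x = 0 ↔ x % 2 = 0 ∧ a &&& (x/2) = 0 := by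
  rw [land_zero_iff, show (2*a+1) % 2 = 1 by omega, show (2*a+1)/2 = a by omega]
  simp

lemma ucount_zero (x z : ℕ) : ucount 0 x z = 1 := by
  rw [ucount, show (0:ℕ)+1 = 1 from rfl, Finset.range_one]
  rw [Finset.filter_singleton]
  rw [if_pos]
  · simp
  · simp

lemma ucount_odd (m x z : ℕ) : ucount (2*m+1) x z =
    ((if x % 2 = 0 then 1 else 0) + (if z % 2 = 0 then 1 else 0)) * ucount m (x/2) (z/2) := by
  rw [ucount_eq_sum, show (2*m+1)+1 = 2*(m+1) by ring, sum_range_even]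
  rw [ucount_eq_sum, Finset.mul_sum]
  apply Finset.sum_congr rfl
  intro a ha
  rw [Finset.mem_range] at ha
  have h1 : (2*m+1 - 2*a) = 2*(m-a)+1 := by omega
  have h2 : (2*m+1 - (2*a+1)) = 2*(m-a) := by omega
  simp only [h1, h2, land_even_right, land_odd_right, land_odd_left, land_even_left]
  by_cases hx : x % 2 = 0 <;> by_cases hz : z % 2 = 0 <;>
    by_cases hA : (x/2) &&& a = 0 <;> by_cases hB : (m-a) &&& (z/2) = 0 <;>
    simp [hx, hz, hA, hB]

lemma ucount_even (m x z : ℕ) (hm : 1 ≤ m) : ucount (2*m) x z =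
    ucount m (x/2) (z/2) +
      (if x % 2 = 0 ∧ z % 2 = 0 then ucount (m-1) (x/2) (z/2) else 0) := by
  obtain ⟨m', rfl⟩ : ∃ m', m = m' + 1 := ⟨m - 1, by omega⟩
  rw [ucount_eq_sum, Finset.sum_range_succ, sum_range_even]
  have hlast : (if x &&& (2*(m'+1)) = 0 ∧ (2*(m'+1) - 2*(m'+1)) &&& z = 0 then 1 else 0)
      = (if (x/2) &&& (m'+1) = 0 ∧ ((m'+1) - (m'+1)) &&& (z/2) = 0 then (1:ℕ) else 0) := by
    simp only [show 2*(m'+1) - 2*(m'+1) = 0 by omega, show (m'+1) - (m'+1) = 0 by omega,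
      land_even_right]
    simp
  have hmain : ∑ a ∈ Finset.range (m'+1),
      ((if x &&& (2*a) = 0 ∧ (2*(m'+1) - 2*a) &&& z = 0 then 1 else 0) +
       (if x &&& (2*a+1) = 0 ∧ (2*(m'+1) - (2*a+1)) &&& z = 0 then 1 else 0)) =
      ∑ a ∈ Finset.range (m'+1),
      (((if (x/2) &&& a = 0 ∧ ((m'+1) - a) &&& (z/2) = 0 then 1 else 0) : ℕ) +
       (if x % 2 = 0 ∧ z % 2 = 0 then
          (if (x/2) &&& a = 0 ∧ (m' - a) &&& (z/2) = 0 then 1 else 0) else 0)) := by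
    apply Finset.sum_congr rfl
    intro a ha
    rw [Finset.mem_range] at ha
    have h1 : (2*(m'+1) - 2*a) = 2*((m'+1)-a) := by omega
    have h2 : (2*(m'+1) - (2*a+1)) = 2*(m'-a)+1 := by omega
    simp only [h1, h2, land_even_right, land_even_left, land_odd_right, land_odd_left]
    by_cases hx : x % 2 = 0 <;> by_cases hz : z % 2 = 0 <;> simp [hx, hz]
  rw [hlast, hmain, Finset.sum_add_distrib]
  have e1 : ucount (m'+1) (x/2) (z/2) =
      (∑ a ∈ Finset.range (m'+1),
        ((if (x/2) &&& a = 0 ∧ ((m'+1) - a) &&& (z/2) = 0 then 1 else 0) : ℕ)) +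
      (if (x/2) &&& (m'+1) = 0 ∧ ((m'+1) - (m'+1)) &&& (z/2) = 0 then 1 else 0) := by
    rw [ucount_eq_sum, Finset.sum_range_succ]
  have e2 : (if x % 2 = 0 ∧ z % 2 = 0 then ucount ((m'+1)-1) (x/2) (z/2) else 0) =
      ∑ a ∈ Finset.range (m'+1),
        (if x % 2 = 0 ∧ z % 2 = 0 then
          (if (x/2) &&& a = 0 ∧ (m' - a) &&& (z/2) = 0 then (1:ℕ) else 0) else 0) := by
    by_cases hxz : x % 2 = 0 ∧ z % 2 = 0
    · simp only [hxz, if_true, show (m'+1)-1 = m' by omega, ucount_eq_sum]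
      simp
    · simp [hxz]
  rw [e1, e2]
  omega

def piFn : ℕ → ℕ → ℕ → ℕ
  | 0, _, _ => 1
  | (d+1), u, v =>
      ((if u % 2 = 0 then 1 else 0) + (if v % 2 = 0 then 1 else 0)) * piFn d (u/2) (v/2)

def tFn : ℕ → ℕ → ℕ → ℕ
  | 0, _, _ => 0
  | (d+1), u, v =>
      (if u % 2 = 0 ∧ v % 2 = 0 then 1 else 0) * piFn d (u/2) (v/2) + tFn d (u/2) (v/2)

lemma ucount_aux_decomp : ∀ d x z y, 1 ≤ y →
    ucount (2^d * y - 1) x z = piFn d x z * ucount (y-1) (x / 2^d) (z / 2^d) := by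
  intro d
  induction d with
  | zero => intro x z y hy; simp [piFn]
  | succ d ih =>
    intro x z y hy
    have h2 : (0:ℕ) < 2^d * y := Nat.mul_pos (Nat.two_pow_pos d) hy
    have he : 2^(d+1) * y = 2*(2^d * y) := by rw [pow_succ]; ring
    have h1 : 2^(d+1) * y - 1 = 2*(2^d * y - 1) + 1 := by rw [he]; omega
    rw [h1, ucount_odd, ih (x/2) (z/2) y hy]
    rw [piFn]
    rw [Nat.div_div_eq_div_mul, Nat.div_div_eq_div_mul]
    rw [show (2:ℕ) * 2^d = 2^(d+1) by rw [pow_succ]; ring]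
    ring

lemma ucount_main_decomp : ∀ d x z y, 1 ≤ y →
    ucount (2^d * y) x z =
      tFn d x z * ucount (y-1) (x / 2^d) (z / 2^d) + ucount y (x / 2^d) (z / 2^d) := by
  intro d
  induction d with
  | zero => intro x z y hy; simp [tFn]
  | succ d ih =>
    intro x z y hy
    have h2 : (1:ℕ) ≤ 2^d * y := Nat.mul_pos (Nat.two_pow_pos d) hy
    have h1 : 2^(d+1) * y = 2*(2^d * y) := by rw [pow_succ]; ring
    rw [h1, ucount_even _ _ _ h2, ih (x/2) (z/2) y hy,
      ucount_aux_decomp d (x/2) (z/2) y hy]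
    rw [tFn]
    rw [Nat.div_div_eq_div_mul, Nat.div_div_eq_div_mul]
    rw [show (2:ℕ) * 2^d = 2^(d+1) by rw [pow_succ]; ring]
    by_cases hxz : x % 2 = 0 ∧ z % 2 = 0 <;> simp [hxz] <;> ring

lemma div2_mod_pow (a e : ℕ) : (a/2) % 2^e = a % 2^(e+1) / 2 := by
  rw [← Nat.mod_mul_right_div_self]
  congr 2
  rw [pow_succ]; ring

lemma divpow_mod_pow (a j e : ℕ) : (a / 2^j) % 2^e = a % 2^(e+j) / 2^j := by
  have h : (2:ℕ)^j * 2^e = 2^(e+j) := by rw [← pow_add]; congr 1; omega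
  rw [← Nat.mod_mul_right_div_self, h]

lemma mod_pow_mod_two (a e : ℕ) : a % 2^(e+1) % 2 = a % 2 :=
  Nat.mod_mod_of_dvd _ ⟨2^e, by rw [pow_succ]; ring⟩

lemma mod_pow_succ_eq (a e : ℕ) : a % 2^(e+1) = 2 * ((a/2) % 2^e) + a % 2 := by
  rw [div2_mod_pow, ← mod_pow_mod_two a e]
  omega

lemma good_shift (a e : ℕ) : a % 2^(e+2) < 2^(e+1) ↔ (a/2) % 2^(e+1) < 2^e := by
  rw [show e+2 = e+1+1 by omega, div2_mod_pow a (e+1)]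
  have h : (2:ℕ)^(e+2) = 2 * 2^(e+1) := by rw [pow_succ]; ring
  have h2 : (2:ℕ)^(e+1) = 2 * 2^e := by rw [pow_succ]; ring
  omega

lemma land_sum_lt : ∀ k a b : ℕ, a < 2^k → b < 2^k → a &&& b = 0 → a + b < 2^k := by
  intro k
  induction k with
  | zero => intro a b ha hb _; simp at ha hb; omega
  | succ k ih =>
    intro a b ha hb hl
    rw [land_zero_iff] at hl
    have hp : (2:ℕ)^(k+1) = 2 * 2^k := by rw [pow_succ]; ring
    have := ih (a/2) (b/2) (by omega) (by omega) hl.2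
    omega

lemma land_of_sum_full : ∀ k a b : ℕ, a + b = 2^k - 1 → a &&& b = 0 := by
  intro k
  induction k with
  | zero => intro a b h; simp at h; simp [h.1, h.2]
  | succ k ih =>
    intro a b h
    have hp : (2:ℕ)^(k+1) = 2 * 2^k := by rw [pow_succ]; ring
    have hpk : (1:ℕ) ≤ 2^k := Nat.one_le_two_pow
    rw [land_zero_iff]
    constructor
    · omega
    · exact ih (a/2) (b/2) (by omega)

lemma no_good_sum : ∀ k a b : ℕ,
    (∀ e, e < k → ¬(a % 2^(e+1) < 2^e ∧ b % 2^(e+1) < 2^e)) → 2^k - 1 ≤ a + b := by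
  intro k
  induction k with
  | zero => intro a b _; simp
  | succ k ih =>
    intro a b h
    have h0 := h 0 (by omega)
    simp only [pow_zero, pow_one] at h0
    have hh : ∀ e, e < k → ¬((a/2) % 2^(e+1) < 2^e ∧ (b/2) % 2^(e+1) < 2^e) := by
      intro e he hc
      exact h (e+1) (by omega) ⟨(good_shift a e).mpr hc.1, (good_shift b e).mpr hc.2⟩
    have := ih (a/2) (b/2) hh
    have hp : (2:ℕ)^(k+1) = 2 * 2^k := by rw [pow_succ]; ring
    omega

lemma overlap_no_good_sum : ∀ k a b : ℕ,
    (∀ e, e < k → ¬(a % 2^(e+1) < 2^e ∧ b % 2^(e+1) < 2^e)) → a &&& b ≠ 0 →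
    2^k ≤ a + b := by
  intro k
  induction k with
  | zero =>
    intro a b _ hl
    rcases Nat.eq_zero_or_pos (a+b) with h | h
    · exfalso; apply hl
      have ha : a = 0 := by omega
      subst ha; simp
    · simp only [pow_zero]; omega
  | succ k ih =>
    intro a b h hl
    have h0 := h 0 (by omega)
    simp only [pow_zero, pow_one] at h0
    have hh : ∀ e, e < k → ¬((a/2) % 2^(e+1) < 2^e ∧ (b/2) % 2^(e+1) < 2^e) := by
      intro e he hc
      exact h (e+1) (by omega) ⟨(good_shift a e).mpr hc.1, (good_shift b e).mpr hc.2⟩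
    have hp : (2:ℕ)^(k+1) = 2 * 2^k := by rw [pow_succ]; ring
    by_cases hhl : (a/2) &&& (b/2) = 0
    · -- the overlap must be at bit 0, so both odd
      have hpar : a % 2 = 1 ∧ b % 2 = 1 := by
        by_contra hc
        exact hl ((land_zero_iff a b).mpr ⟨by omega, hhl⟩)
      have := no_good_sum k (a/2) (b/2) hh
      omega
    · have := ih (a/2) (b/2) hh hhl
      omega

lemma land_mod_pow : ∀ k a b : ℕ, a &&& b = 0 → (a % 2^k) &&& (b % 2^k) = 0 := by
  intro k
  induction k with
  | zero => intro a b _; simp [Nat.mod_one]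
  | succ k ih =>
    intro a b h
    rw [land_zero_iff] at h
    rw [land_zero_iff]
    refine ⟨?_, ?_⟩
    · rw [mod_pow_mod_two, mod_pow_mod_two]
      exact h.1
    · rw [← div2_mod_pow, ← div2_mod_pow]
      exact ih _ _ h.2

lemma land_div_pow : ∀ k a b : ℕ, a &&& b = 0 → (a / 2^k) &&& (b / 2^k) = 0 := by
  intro k
  induction k with
  | zero => intro a b h; simpa using h
  | succ k ih =>
    intro a b h
    have h1 := (land_zero_iff a b).mp h
    have := ih (a/2) (b/2) h1.2
    rw [Nat.div_div_eq_div_mul, Nat.div_div_eq_div_mul] at this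
    rw [show (2:ℕ)^(k+1) = 2 * 2^k by rw [pow_succ]; ring]
    exact this

lemma land_of_parts : ∀ k a b : ℕ,
    (a % 2^k) &&& (b % 2^k) = 0 → (a / 2^k) &&& (b / 2^k) = 0 → a &&& b = 0 := by
  intro k
  induction k with
  | zero => intro a b _ h; simpa using h
  | succ k ih =>
    intro a b hlow hhigh
    have h1 := (land_zero_iff _ _).mp hlow
    rw [mod_pow_mod_two, mod_pow_mod_two, ← div2_mod_pow, ← div2_mod_pow] at h1
    rw [land_zero_iff]
    refine ⟨h1.1, ih (a/2) (b/2) h1.2 ?_⟩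
    rw [Nat.div_div_eq_div_mul, Nat.div_div_eq_div_mul,
      show (2:ℕ) * 2^k = 2^(k+1) by rw [pow_succ]; ring]
    exact hhigh

lemma findGreatest_congr (P Q : ℕ → Prop) [DecidablePred P] [DecidablePred Q] :
    ∀ n, (∀ k, k ≤ n → (P k ↔ Q k)) → Nat.findGreatest P n = Nat.findGreatest Q n := by
  intro n
  induction n with
  | zero => intro _; simp
  | succ n ih =>
    intro h
    rw [Nat.findGreatest_succ, Nat.findGreatest_succ, ih (fun k hk => h k (by omega))]
    by_cases hP : P (n+1)
    · rw [if_pos hP, if_pos ((h (n+1) le_rfl).mp hP)]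
    · rw [if_neg hP, if_neg (fun hQ => hP ((h (n+1) le_rfl).mpr hQ))]

lemma eIdx_mod_eq (d x z : ℕ) : eIdx d (x % 2^d) (z % 2^d) = eIdx d x z := by
  rcases Nat.eq_zero_or_pos d with rfl | hdpos
  · rfl
  unfold eIdx
  apply findGreatest_congr
  intro k hk
  have hd : k + 1 ≤ d := by omega
  have e1 : x % 2^d % 2^(k+1) = x % 2^(k+1) :=
    Nat.mod_mod_of_dvd _ (pow_dvd_pow 2 hd)
  have e2 : z % 2^d % 2^(k+1) = z % 2^(k+1) :=
    Nat.mod_mod_of_dvd _ (pow_dvd_pow 2 hd)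
  rw [e1, e2]

lemma eIdx_succ (d u v : ℕ) :
    eIdx (d+1) u v =
      if ∃ e, e < d ∧ (u/2) % 2^(e+1) < 2^e ∧ (v/2) % 2^(e+1) < 2^e
      then eIdx d (u/2) (v/2) + 1 else 0 := by
  by_cases hex : ∃ e, e < d ∧ (u/2) % 2^(e+1) < 2^e ∧ (v/2) % 2^(e+1) < 2^e
  · rw [if_pos hex]
    obtain ⟨e, hed, he⟩ := hex
    have hd1 : 1 ≤ d := by omega
    have hGs : (u/2) % 2^(eIdx d (u/2) (v/2)+1) < 2^(eIdx d (u/2) (v/2)) ∧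
        (v/2) % 2^(eIdx d (u/2) (v/2)+1) < 2^(eIdx d (u/2) (v/2)) :=
      Nat.findGreatest_spec
        (P := fun e => (u/2) % 2^(e+1) < 2^e ∧ (v/2) % 2^(e+1) < 2^e)
        (by omega : e ≤ d - 1) he
    have hsle : eIdx d (u/2) (v/2) ≤ d - 1 :=
      Nat.findGreatest_le (P := fun e => (u/2) % 2^(e+1) < 2^e ∧ (v/2) % 2^(e+1) < 2^e) _
    have hmax : ∀ j, eIdx d (u/2) (v/2) < j → j ≤ d - 1 →
        ¬((u/2) % 2^(j+1) < 2^j ∧ (v/2) % 2^(j+1) < 2^j) := by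
      unfold eIdx
      intro j h1 h2
      exact Nat.findGreatest_is_greatest
        (P := fun e => (u/2) % 2^(e+1) < 2^e ∧ (v/2) % 2^(e+1) < 2^e) h1 h2
    set s := eIdx d (u/2) (v/2) with hs
    show Nat.findGreatest _ ((d+1)-1) = s + 1
    rw [show (d+1)-1 = d by omega]
    rw [Nat.findGreatest_eq_iff]
    refine ⟨by omega, fun _ => ⟨?_, ?_⟩, ?_⟩
    · exact (good_shift u s).mpr hGs.1
    · exact (good_shift v s).mpr hGs.2
    · intro k hk hkd hGk
      obtain ⟨k', rfl⟩ : ∃ k', k = k' + 1 := ⟨k - 1, by omega⟩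
      have : ¬ ((u/2) % 2^(k'+1) < 2^k' ∧ (v/2) % 2^(k'+1) < 2^k') :=
        hmax k' (by omega) (by omega)
      exact this ⟨(good_shift u k').mp hGk.1, (good_shift v k').mp hGk.2⟩
  · rw [if_neg hex]
    show Nat.findGreatest _ ((d+1)-1) = 0
    rw [show (d+1)-1 = d by omega]
    rw [Nat.findGreatest_eq_zero_iff]
    intro k hk hkd hGk
    obtain ⟨k', rfl⟩ : ∃ k', k = k' + 1 := ⟨k - 1, by omega⟩
    exact hex ⟨k', by omega, (good_shift u k').mp hGk.1, (good_shift v k').mp hGk.2⟩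


lemma E1_le (d a b : ℕ) : E1 d a b ≤ 2 := by
  unfold E1
  split
  · omega
  · split <;> omega

lemma eIdx_good (d a b : ℕ)
    (hex : ∃ e, e < d ∧ a % 2^(e+1) < 2^e ∧ b % 2^(e+1) < 2^e) :
    a % 2^(eIdx d a b + 1) < 2^(eIdx d a b) ∧ b % 2^(eIdx d a b + 1) < 2^(eIdx d a b) := by
  obtain ⟨e, hed, he⟩ := hex
  unfold eIdx
  exact Nat.findGreatest_spec
    (P := fun e => a % 2^(e+1) < 2^e ∧ b % 2^(e+1) < 2^e) (by omega : e ≤ d - 1) he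

lemma eIdx_max (d a b : ℕ) : ∀ j, eIdx d a b < j → j ≤ d - 1 →
    ¬(a % 2^(j+1) < 2^j ∧ b % 2^(j+1) < 2^j) := by
  unfold eIdx
  intro j h1 h2
  exact Nat.findGreatest_is_greatest
    (P := fun e => a % 2^(e+1) < 2^e ∧ b % 2^(e+1) < 2^e) h1 h2

lemma disjoint_good_sum_lt (d e a b : ℕ) (he : e < d) (ha : a < 2^d) (hb : b < 2^d)
    (hl : a &&& b = 0) (hg : a % 2^(e+1) < 2^e ∧ b % 2^(e+1) < 2^e) :
    a + b < 2^d - 1 := by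
  have hdisj : (a/2^(e+1)) &&& (b/2^(e+1)) = 0 := land_div_pow _ _ _ hl
  have hPQ : (2:ℕ)^(e+1) * 2^(d-e-1) = 2^d := by
    rw [← pow_add]; congr 1; omega
  have hha : a/2^(e+1) < 2^(d-e-1) := Nat.div_lt_of_lt_mul (by rw [hPQ]; exact ha)
  have hhb : b/2^(e+1) < 2^(d-e-1) := Nat.div_lt_of_lt_mul (by rw [hPQ]; exact hb)
  have hsum := land_sum_lt (d-e-1) _ _ hha hhb hdisj
  have hda : 2^(e+1) * (a/2^(e+1)) + a % 2^(e+1) = a := Nat.div_add_mod a (2^(e+1))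
  have hdb : 2^(e+1) * (b/2^(e+1)) + b % 2^(e+1) = b := Nat.div_add_mod b (2^(e+1))
  have hmul : 2^(e+1) * (a/2^(e+1) + b/2^(e+1) + 1) ≤ 2^(e+1) * 2^(d-e-1) :=
    Nat.mul_le_mul_left _ (by omega)
  have hexp : 2^(e+1) * (a/2^(e+1) + b/2^(e+1) + 1) =
      2^(e+1) * (a/2^(e+1)) + 2^(e+1) * (b/2^(e+1)) + 2^(e+1) := by ring
  have hPR : (2:ℕ)^(e+1) = 2 * 2^e := by rw [pow_succ]; ring
  omega

lemma min2_piFn : ∀ d x z, min 2 (piFn d x z) =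
    (if (x % 2^d) &&& (z % 2^d) ≠ 0 then 0
     else if x % 2^d + z % 2^d < 2^d - 1 then 2 else 1) := by
  intro d
  induction d with
  | zero =>
    intro x z
    norm_num [piFn, Nat.mod_one]
  | succ d ih =>
    intro x z
    have ih' := ih (x/2) (z/2)
    have hu2 : x % 2^(d+1) / 2 = (x/2) % 2^d := (div2_mod_pow x d).symm
    have hv2 : z % 2^(d+1) / 2 = (z/2) % 2^d := (div2_mod_pow z d).symm
    have hx0 : x % 2^(d+1) % 2 = x % 2 := mod_pow_mod_two x d
    have hz0 : z % 2^(d+1) % 2 = z % 2 := mod_pow_mod_two z d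
    have hxu : x % 2^(d+1) = 2 * ((x/2) % 2^d) + x % 2 := mod_pow_succ_eq x d
    have hzv : z % 2^(d+1) = 2 * ((z/2) % 2^d) + z % 2 := mod_pow_succ_eq z d
    have hland : (x % 2^(d+1)) &&& (z % 2^(d+1)) = 0 ↔
        (x % 2 = 0 ∨ z % 2 = 0) ∧ ((x/2) % 2^d) &&& ((z/2) % 2^d) = 0 := by
      rw [land_zero_iff, hx0, hz0, hu2, hv2]
    have hp : (2:ℕ)^(d+1) = 2 * 2^d := by rw [pow_succ]; ring
    have hA : (x/2) % 2^d < 2^d := Nat.mod_lt _ (Nat.two_pow_pos d)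
    have hB : (z/2) % 2^d < 2^d := Nat.mod_lt _ (Nat.two_pow_pos d)
    show min 2 (((if x % 2 = 0 then 1 else 0) + (if z % 2 = 0 then 1 else 0))
        * piFn d (x/2) (z/2)) = _
    rcases Nat.mod_two_eq_zero_or_one x with hx | hx <;>
      rcases Nat.mod_two_eq_zero_or_one z with hz | hz
    · -- both even
      rw [if_pos hx, if_pos hz]
      by_cases hab : ((x/2) % 2^d) &&& ((z/2) % 2^d) = 0
      · have hUV : (x % 2^(d+1)) &&& (z % 2^(d+1)) = 0 := hland.mpr ⟨Or.inl hx, hab⟩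
        rw [if_neg (by simp [hUV])]
        have hs := land_sum_lt d _ _ hA hB hab
        have hcond : x % 2^(d+1) + z % 2^(d+1) < 2^(d+1) - 1 := by omega
        rw [if_pos hcond]
        have hpi : 1 ≤ piFn d (x/2) (z/2) := by
          rw [if_neg (by simpa using hab)] at ih'
          by_cases hsum : (x/2) % 2^d + (z/2) % 2^d < 2^d - 1
          · rw [if_pos hsum] at ih'; omega
          · rw [if_neg hsum] at ih'; omega
        have : (1+1) * piFn d (x/2) (z/2) = 2 * piFn d (x/2) (z/2) := by ring
        rw [this]
        omega
      · have hUV : ¬ (x % 2^(d+1)) &&& (z % 2^(d+1)) = 0 := fun hc => hab (hland.mp hc).2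
        rw [if_pos (by simpa using hUV)]
        have hpi0 : piFn d (x/2) (z/2) = 0 := by
          rw [if_pos (by simpa using hab)] at ih'
          omega
        rw [hpi0]
        simp
    · -- x even z odd
      rw [if_pos hx, if_neg (by omega)]
      have hone : ((1:ℕ)+0) * piFn d (x/2) (z/2) = piFn d (x/2) (z/2) := by ring
      have hiff1 : ((x % 2^(d+1)) &&& (z % 2^(d+1)) ≠ 0) ↔
          (((x/2) % 2^d) &&& ((z/2) % 2^d) ≠ 0) :=
        not_congr ⟨fun hc => (hland.mp hc).2, fun hc => hland.mpr ⟨Or.inl hx, hc⟩⟩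
      have hiff2 : (x % 2^(d+1) + z % 2^(d+1) < 2^(d+1) - 1) ↔
          ((x/2) % 2^d + (z/2) % 2^d < 2^d - 1) := by omega
      rw [hone, ih']
      simp only [hiff1, hiff2]
    · -- x odd z even
      rw [if_neg (by omega), if_pos hz]
      have hone : ((0:ℕ)+1) * piFn d (x/2) (z/2) = piFn d (x/2) (z/2) := by ring
      have hiff1 : ((x % 2^(d+1)) &&& (z % 2^(d+1)) ≠ 0) ↔
          (((x/2) % 2^d) &&& ((z/2) % 2^d) ≠ 0) :=
        not_congr ⟨fun hc => (hland.mp hc).2, fun hc => hland.mpr ⟨Or.inr hz, hc⟩⟩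
      have hiff2 : (x % 2^(d+1) + z % 2^(d+1) < 2^(d+1) - 1) ↔
          ((x/2) % 2^d + (z/2) % 2^d < 2^d - 1) := by omega
      rw [hone, ih']
      simp only [hiff1, hiff2]
    · -- both odd
      rw [if_neg (by omega), if_neg (by omega)]
      have hUV : ¬ (x % 2^(d+1)) &&& (z % 2^(d+1)) = 0 := by
        intro hc
        have := (hland.mp hc).1
        omega
      rw [if_pos (by simpa using hUV)]
      simp

lemma min2_tFn : ∀ d x z, min 2 (tFn d x z) = E1 d (x % 2^d) (z % 2^d) := by
  intro d
  induction d with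
  | zero =>
    intro x z
    have h0 : tFn 0 x z = 0 := rfl
    rw [h0]
    unfold E1
    rw [if_pos (by norm_num)]
    norm_num
  | succ d ih =>
    intro x z
    have ih' := ih (x/2) (z/2)
    have hpi := min2_piFn d (x/2) (z/2)
    have hu2 : x % 2^(d+1) / 2 = (x/2) % 2^d := (div2_mod_pow x d).symm
    have hv2 : z % 2^(d+1) / 2 = (z/2) % 2^d := (div2_mod_pow z d).symm
    have hx0 : x % 2^(d+1) % 2 = x % 2 := mod_pow_mod_two x d
    have hz0 : z % 2^(d+1) % 2 = z % 2 := mod_pow_mod_two z d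
    have hxu : x % 2^(d+1) = 2 * ((x/2) % 2^d) + x % 2 := mod_pow_succ_eq x d
    have hzv : z % 2^(d+1) = 2 * ((z/2) % 2^d) + z % 2 := mod_pow_succ_eq z d
    have hp : (2:ℕ)^(d+1) = 2 * 2^d := by rw [pow_succ]; ring
    have hA : (x/2) % 2^d < 2^d := Nat.mod_lt _ (Nat.two_pow_pos d)
    have hB : (z/2) % 2^d < 2^d := Nat.mod_lt _ (Nat.two_pow_pos d)
    set A := (x/2) % 2^d with hA'
    set B := (z/2) % 2^d with hB'
    have hsplit : min 2 (tFn (d+1) x z)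
        = min 2 ((if x % 2 = 0 ∧ z % 2 = 0 then 1 else 0) * min 2 (piFn d (x/2) (z/2))
            + min 2 (tFn d (x/2) (z/2))) := by
      show min 2 ((if x % 2 = 0 ∧ z % 2 = 0 then 1 else 0) * piFn d (x/2) (z/2)
          + tFn d (x/2) (z/2)) = _
      by_cases hxz : x % 2 = 0 ∧ z % 2 = 0
      · rw [if_pos hxz, one_mul, one_mul]; omega
      · rw [if_neg hxz, zero_mul, zero_mul, zero_add, zero_add]; omega
    rw [hsplit, ih', hpi]
    by_cases hcase : 2^(d+1) - 1 ≤ x % 2^(d+1) + z % 2^(d+1)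
    · -- outer zero case
      have hR : E1 (d+1) (x % 2^(d+1)) (z % 2^(d+1)) = 0 := by
        unfold E1; rw [if_pos hcase]
      rw [hR]
      have hAB1 : 2^d - 1 ≤ A + B := by omega
      have hE0 : E1 d A B = 0 := by unfold E1; rw [if_pos hAB1]
      rw [hE0]
      by_cases hxz : x % 2 = 0 ∧ z % 2 = 0
      · have hge : 2^d ≤ A + B := by omega
        have hab : ¬ (A &&& B = 0) := fun h => by
          have := land_sum_lt d A B hA hB h; omega
        rw [if_pos hxz, if_pos (by simpa using hab)]
        simp
      · rw [if_neg hxz]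
        simp
    · -- comparison case
      have hUVlt : x % 2^(d+1) + z % 2^(d+1) < 2^(d+1) - 1 := by omega
      have hABle : A + B < 2^d := by omega
      by_cases hxz : x % 2 = 0 ∧ z % 2 = 0
      · rw [if_pos hxz, one_mul]
        by_cases hab : A &&& B = 0
        · -- B1b : halves disjoint
          rw [if_neg (by simpa using hab)]
          by_cases hsum : A + B < 2^d - 1
          · -- B1b-ii
            rw [if_pos hsum]
            have hle := E1_le d A B
            have hL : min 2 (2 + E1 d A B) = 2 := by omega
            rw [hL]
            have hex : ∃ e, e < d ∧ A % 2^(e+1) < 2^e ∧ B % 2^(e+1) < 2^e := by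
              by_contra hc
              have := no_good_sum d A B (fun e he hg => hc ⟨e, he, hg.1, hg.2⟩)
              omega
            have hG := eIdx_good d A B hex
            have heidx : eIdx (d+1) (x % 2^(d+1)) (z % 2^(d+1)) = eIdx d A B + 1 := by
              rw [eIdx_succ]
              simp only [hu2, hv2]
              rw [if_pos hex]
            have hUs : x % 2^(d+1) % 2^(eIdx d A B + 1) = 2 * (A % 2^(eIdx d A B)) := by
              rw [mod_pow_succ_eq (x % 2^(d+1)) (eIdx d A B), hu2, hx0]
              omega
            have hVs : z % 2^(d+1) % 2^(eIdx d A B + 1) = 2 * (B % 2^(eIdx d A B)) := by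
              rw [mod_pow_succ_eq (z % 2^(d+1)) (eIdx d A B), hv2, hz0]
              omega
            have hps : (2:ℕ)^(eIdx d A B + 1) = 2 * 2^(eIdx d A B) := by rw [pow_succ]; ring
            have hlowland := land_mod_pow (eIdx d A B) A B hab
            have hlowlt := land_sum_lt (eIdx d A B) _ _
              (Nat.mod_lt _ (Nat.two_pow_pos _))
              (Nat.mod_lt _ (Nat.two_pow_pos _)) hlowland
            unfold E1
            rw [if_neg hcase, heidx, hUs, hVs, if_pos (by omega)]
          · -- B1b-i
            rw [if_neg hsum]
            have hABfull : A + B = 2^d - 1 := by omega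
            have hE0 : E1 d A B = 0 := by unfold E1; rw [if_pos (by omega)]
            rw [hE0]
            have hnogood : ∀ e, e < d → ¬(A % 2^(e+1) < 2^e ∧ B % 2^(e+1) < 2^e) := by
              intro e he hg
              have := disjoint_good_sum_lt d e A B he hA hB hab hg
              omega
            have heidx : eIdx (d+1) (x % 2^(d+1)) (z % 2^(d+1)) = 0 := by
              rw [eIdx_succ]
              simp only [hu2, hv2]
              rw [if_neg (fun ⟨e, he, h1, h2⟩ => hnogood e he ⟨h1, h2⟩)]
            unfold E1
            rw [if_neg hcase, heidx]
            rw [if_neg (by norm_num [pow_zero, Nat.mod_one])]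
            norm_num
        · -- B1a : halves overlap
          rw [if_pos (by simpa using hab)]
          have hsum : A + B < 2^d - 1 := by
            by_contra hc
            have hfull : A + B = 2^d - 1 := by omega
            exact hab (land_of_sum_full d A B hfull)
          have hex : ∃ e, e < d ∧ A % 2^(e+1) < 2^e ∧ B % 2^(e+1) < 2^e := by
            by_contra hc
            have := no_good_sum d A B (fun e he hg => hc ⟨e, he, hg.1, hg.2⟩)
            omega
          have hd1 : 1 ≤ d := by obtain ⟨e, he, -⟩ := hex; omega
          have hG := eIdx_good d A B hex
          have hsle : eIdx d A B ≤ d - 1 := by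
            unfold eIdx; exact Nat.findGreatest_le _
          have hmax := eIdx_max d A B
          -- the subtle exclusion of the boundary case
          have hne : A % 2^(eIdx d A B) + B % 2^(eIdx d A B) ≠ 2^(eIdx d A B) - 1 := by
            intro hfull
            have hlow : (A % 2^(eIdx d A B)) &&& (B % 2^(eIdx d A B)) = 0 :=
              land_of_sum_full _ _ _ hfull
            set s := eIdx d A B with hs
            have hhigh : (A / 2^(s+1)) &&& (B / 2^(s+1)) = 0 := by
              by_contra hc
              have hng : ∀ e, e < d - s - 1 →
                  ¬((A/2^(s+1)) % 2^(e+1) < 2^e ∧ (B/2^(s+1)) % 2^(e+1) < 2^e) := by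
                intro e he hg
                apply hmax (s+1+e) (by omega) (by omega)
                have pow1 : (2:ℕ)^(s+1+e) = 2^e * 2^(s+1) := by
                  rw [← pow_add]; congr 1; omega
                constructor
                · rw [show (s+1+e)+1 = e+1+(s+1) by omega]
                  have h1 : (A/2^(s+1)) % 2^(e+1) = A % 2^(e+1+(s+1)) / 2^(s+1) :=
                    divpow_mod_pow A (s+1) (e+1)
                  rw [h1] at hg
                  have := (Nat.div_lt_iff_lt_mul (Nat.two_pow_pos (s+1))).mp hg.1
                  rw [pow1]
                  exact this
                · rw [show (s+1+e)+1 = e+1+(s+1) by omega]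
                  have h1 : (B/2^(s+1)) % 2^(e+1) = B % 2^(e+1+(s+1)) / 2^(s+1) :=
                    divpow_mod_pow B (s+1) (e+1)
                  rw [h1] at hg
                  have := (Nat.div_lt_iff_lt_mul (Nat.two_pow_pos (s+1))).mp hg.2
                  rw [pow1]
                  exact this
              have hge := overlap_no_good_sum (d-s-1) _ _ hng hc
              have hmul : 2^(s+1) * 2^(d-s-1) ≤ 2^(s+1) * (A/2^(s+1) + B/2^(s+1)) :=
                Nat.mul_le_mul_left _ hge
              have hpow : (2:ℕ)^(s+1) * 2^(d-s-1) = 2^d := by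
                rw [← pow_add]; congr 1; omega
              have hdist : 2^(s+1) * (A/2^(s+1) + B/2^(s+1))
                  = 2^(s+1) * (A/2^(s+1)) + 2^(s+1) * (B/2^(s+1)) := by ring
              have hdmA := Nat.div_add_mod A (2^(s+1))
              have hdmB := Nat.div_add_mod B (2^(s+1))
              omega
            have hmidA : A % 2^(s+1) = A % 2^s := by
              have h1 : A % 2^(s+1) < 2^s := hG.1
              have h2 : A % 2^s = A % 2^(s+1) % 2^s :=
                (Nat.mod_mod_of_dvd _ (pow_dvd_pow 2 (by omega))).symm
              rw [h2, Nat.mod_eq_of_lt h1]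
            have hmidB : B % 2^(s+1) = B % 2^s := by
              have h1 : B % 2^(s+1) < 2^s := hG.2
              have h2 : B % 2^s = B % 2^(s+1) % 2^s :=
                (Nat.mod_mod_of_dvd _ (pow_dvd_pow 2 (by omega))).symm
              rw [h2, Nat.mod_eq_of_lt h1]
            exact hab (land_of_parts (s+1) A B (by rw [hmidA, hmidB]; exact hlow) hhigh)
          have heidx : eIdx (d+1) (x % 2^(d+1)) (z % 2^(d+1)) = eIdx d A B + 1 := by
            rw [eIdx_succ]
            simp only [hu2, hv2]
            rw [if_pos hex]
          have hUs : x % 2^(d+1) % 2^(eIdx d A B + 1) = 2 * (A % 2^(eIdx d A B)) := by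
            rw [mod_pow_succ_eq (x % 2^(d+1)) (eIdx d A B), hu2, hx0]
            omega
          have hVs : z % 2^(d+1) % 2^(eIdx d A B + 1) = 2 * (B % 2^(eIdx d A B)) := by
            rw [mod_pow_succ_eq (z % 2^(d+1)) (eIdx d A B), hv2, hz0]
            omega
          have hps : (2:ℕ)^(eIdx d A B + 1) = 2 * 2^(eIdx d A B) := by rw [pow_succ]; ring
          have hL : min 2 (0 + E1 d A B) =
              (if A % 2^(eIdx d A B) + B % 2^(eIdx d A B) < 2^(eIdx d A B) - 1
               then 2 else 1) := by
            unfold E1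
            rw [if_neg (by omega)]
            by_cases hlow : A % 2^(eIdx d A B) + B % 2^(eIdx d A B) < 2^(eIdx d A B) - 1
            · rw [if_pos hlow]; norm_num
            · rw [if_neg hlow]; norm_num
          rw [hL]
          unfold E1
          rw [if_neg hcase, heidx, hUs, hVs]
          by_cases hlow : A % 2^(eIdx d A B) + B % 2^(eIdx d A B) < 2^(eIdx d A B) - 1
          · rw [if_pos hlow, if_pos (by omega)]
          · rw [if_neg hlow, if_neg (by omega)]
      · -- B2 : not both even
        rw [if_neg hxz, zero_mul, zero_add]
        have hLe := E1_le d A B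
        have hpar : 1 ≤ x % 2 + z % 2 := by omega
        have hABlt : A + B < 2^d - 1 := by omega
        have hex : ∃ e, e < d ∧ A % 2^(e+1) < 2^e ∧ B % 2^(e+1) < 2^e := by
          by_contra hc
          have := no_good_sum d A B (fun e he hg => hc ⟨e, he, hg.1, hg.2⟩)
          omega
        have heidx : eIdx (d+1) (x % 2^(d+1)) (z % 2^(d+1)) = eIdx d A B + 1 := by
          rw [eIdx_succ]
          simp only [hu2, hv2]
          rw [if_pos hex]
        have hUs : x % 2^(d+1) % 2^(eIdx d A B + 1) = 2 * (A % 2^(eIdx d A B)) + x % 2 := by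
          rw [mod_pow_succ_eq (x % 2^(d+1)) (eIdx d A B), hu2, hx0]
        have hVs : z % 2^(d+1) % 2^(eIdx d A B + 1) = 2 * (B % 2^(eIdx d A B)) + z % 2 := by
          rw [mod_pow_succ_eq (z % 2^(d+1)) (eIdx d A B), hv2, hz0]
        have hps : (2:ℕ)^(eIdx d A B + 1) = 2 * 2^(eIdx d A B) := by rw [pow_succ]; ring
        have hpar2 : x % 2 + z % 2 ≤ 2 := by omega
        have hL : min 2 (E1 d A B) =
            (if A % 2^(eIdx d A B) + B % 2^(eIdx d A B) < 2^(eIdx d A B) - 1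
             then 2 else 1) := by
          unfold E1
          rw [if_neg (by omega)]
          by_cases hlow : A % 2^(eIdx d A B) + B % 2^(eIdx d A B) < 2^(eIdx d A B) - 1
          · rw [if_pos hlow]; norm_num
          · rw [if_neg hlow]; norm_num
        rw [hL]
        unfold E1
        rw [if_neg hcase, heidx, hUs, hVs]
        by_cases hlow : A % 2^(eIdx d A B) + B % 2^(eIdx d A B) < 2^(eIdx d A B) - 1
        · rw [if_pos hlow, if_pos (by omega)]
        · rw [if_neg hlow, if_neg (by omega)]

lemma culam_eq (y x z : ℕ) : culam y x z = min 2 (ucount y x z) := by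
  unfold culam ucount
  congr 1
  have hset : {a : ℕ | a ≤ y ∧ IsUlam (wordTwo x a) ∧ IsUlam (wordTwo (y - a) z)} =
      ↑((Finset.range (y+1)).filter (fun a => x &&& a = 0 ∧ (y-a) &&& z = 0)) := by
    ext a
    simp only [Set.mem_setOf_eq, Finset.coe_filter, Finset.mem_range, isUlam_wordTwo]
    constructor
    · rintro ⟨h1, h2, h3⟩; exact ⟨by omega, h2, h3⟩
    · rintro ⟨h1, h2, h3⟩; exact ⟨by omega, h2, h3⟩
  rw [hset, Set.ncard_coe_finset]

lemma min2_mul_add (t a b : ℕ) :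
    min 2 (t * a + b) = min 2 (min 2 t * min 2 a + min 2 b) := by
  rcases Nat.lt_or_ge t 2 with ht | ht
  · interval_cases t
    · norm_num <;> omega
    · rcases Nat.lt_or_ge a 2 with ha | ha
      · interval_cases a <;> norm_num <;> omega
      · have h2a : min 2 a = 2 := by omega
        rw [h2a]
        norm_num <;> omega
  · have h2t : min 2 t = 2 := by omega
    rcases Nat.lt_or_ge a 2 with ha | ha
    · interval_cases a <;> rw [h2t] <;> norm_num <;> omega
    · have h4 : 4 ≤ t * a := by
        calc (4:ℕ) = 2 * 2 := rfl
        _ ≤ t * a := Nat.mul_le_mul ht ha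
      have h2a : min 2 a = 2 := by omega
      rw [h2t, h2a]
      omega

/-- tensor decomposition of `culam[2^d y]` for odd `y`. -/
theorem culam_two_pow_mul (y : ℕ) (hy : 0 < y) (hodd : Odd y) (d : ℕ) (hd : 1 ≤ d)
    (x z : ℕ) :
    culam (2 ^ d * y) x z =
      min 2 (culam (y - 1) (x / 2 ^ d) (z / 2 ^ d) * E1 d (x % 2 ^ d) (z % 2 ^ d) +
             culam y (x / 2 ^ d) (z / 2 ^ d) * E2 d (x % 2 ^ d) (z % 2 ^ d)) := by
  have hy1 : 1 ≤ y := hy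
  rw [culam_eq, culam_eq, culam_eq]
  rw [ucount_main_decomp d x z y hy1]
  simp only [E2, mul_one]
  rw [min2_mul_add]
  rw [min2_tFn d x z, mul_comm]
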